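/- Robustness characterizes Boolean finite-trace satisfaction for the propositional-modal fragment: for LTL formulas built from atoms of the form f(L(s)) < c using ∧, ∨, □, ◇, if ρ(t, ψ) > 0 then t satisfies ψ under the Boolean finite semantics (where the atom f(L(s)) < c holds iff f(L(s)) < c), and if ρ(t, ψ) < 0 then t does not satisfy ψ. -/

import Mathlib

/-- The negation-free propositional-modal fragment of LTL, with real-valued
atoms `f(state) < c` and the connectives ∧, ∨, □, ◇. -/
inductive PForm (σ : Type) where
  | atom : (σ → ℝ) → ℝ → PForm σ
  | conj : PForm σ → PForm σ → PForm σ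
  | disj : PForm σ → PForm σ → PForm σ
  | always : PForm σ → PForm σ
  | event : PForm σ → PForm σ

/-- Robustness semantics of the fragment over finite traces. -/
noncomputable def rhoP {σ : Type} : PForm σ → List σ → ℝ
  | .atom f c, t => c - (match t with | [] => 0 | s :: _ => f s)
  | .conj ψ1 ψ2, t => min (rhoP ψ1 t) (rhoP ψ2 t)
  | .disj ψ1 ψ2, t => max (rhoP ψ1 t) (rhoP ψ2 t)
  | .always ψ, t => sInf {x | ∃ i < t.length, x = rhoP ψ (t.drop i)}
  | .event ψ, t => sSup {x | ∃ i < t.length, x = rhoP ψ (t.drop i)}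

/-- Boolean finite-trace semantics of the fragment. -/
def bsat {σ : Type} : PForm σ → List σ → Prop
  | .atom f c, t => match t with | [] => False | s :: _ => f s < c
  | .conj ψ1 ψ2, t => bsat ψ1 t ∧ bsat ψ2 t
  | .disj ψ1 ψ2, t => bsat ψ1 t ∨ bsat ψ2 t
  | .always ψ, t => ∀ i < t.length, bsat ψ (t.drop i)
  | .event ψ, t => ∃ i < t.length, bsat ψ (t.drop i)

/-! Satisfaction gives nonnegative robustness (even on the empty trace), which is the second
claim in contrapositive form; positive robustness gives satisfaction. Both are structural
inductions. In the modal cases the robustness values of the suffixes form a finite set, so its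
`sInf` and `sSup` bound every value, and a positive `sSup` in `ℝ` is attained by a positive
element because `sSup ∅ = 0`. -/

lemma Set.finite_setOf_exists_lt_eq {α : Type*} (n : ℕ) (g : ℕ → α) :
    {x | ∃ i < n, x = g i}.Finite :=
  ((Set.finite_Iio n).image g).subset (by rintro _ ⟨i, hi, rfl⟩; exact ⟨i, hi, rfl⟩)

lemma List.drop_ne_nil_of_lt_length {α : Type*} {t : List α} {i : ℕ} (hi : i < t.length) :
    t.drop i ≠ [] := by
  simpa [List.drop_eq_nil_iff] using hi

namespace PForm

variable {σ : Type}

theorem rhoP_nonneg_of_bsat {ψ : PForm σ} {t : List σ} (h : bsat ψ t) : 0 ≤ rhoP ψ t := by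
  induction ψ generalizing t with
  | atom f c =>
    cases t with
    | nil => exact h.elim
    | cons s t => exact sub_nonneg.2 h.le
  | conj ψ₁ ψ₂ ih₁ ih₂ => exact le_min (ih₁ h.1) (ih₂ h.2)
  | disj ψ₁ ψ₂ ih₁ ih₂ =>
    rcases h with h | h
    · exact le_max_of_le_left (ih₁ h)
    · exact le_max_of_le_right (ih₂ h)
  | always ψ ih =>
    exact Real.sInf_nonneg (by rintro _ ⟨i, hi, rfl⟩; exact ih (h i hi))
  | event ψ ih =>
    obtain ⟨i, hi, h⟩ := h
    exact (ih h).trans <|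
      le_csSup (Set.finite_setOf_exists_lt_eq _ _).bddAbove ⟨i, hi, rfl⟩

theorem bsat_of_rhoP_pos {ψ : PForm σ} {t : List σ} (ht : t ≠ []) (h : 0 < rhoP ψ t) :
    bsat ψ t := by
  induction ψ generalizing t with
  | atom f c =>
    obtain ⟨s, t, rfl⟩ := List.exists_cons_of_ne_nil ht
    exact sub_pos.1 h
  | conj ψ₁ ψ₂ ih₁ ih₂ => exact ⟨ih₁ ht (lt_min_iff.1 h).1, ih₂ ht (lt_min_iff.1 h).2⟩
  | disj ψ₁ ψ₂ ih₁ ih₂ =>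
    rcases lt_max_iff.1 h with h | h
    · exact Or.inl (ih₁ ht h)
    · exact Or.inr (ih₂ ht h)
  | always ψ ih =>
    intro i hi
    refine ih (List.drop_ne_nil_of_lt_length hi) (h.trans_le ?_)
    exact csInf_le (Set.finite_setOf_exists_lt_eq _ _).bddBelow ⟨i, hi, rfl⟩
  | event ψ ih =>
    obtain ⟨_, ⟨i, hi, rfl⟩, hpos⟩ :
        ∃ x ∈ {x | ∃ i < t.length, x = rhoP ψ (t.drop i)}, 0 < x := by
      by_contra! hle
      exact h.not_ge (Real.sSup_nonpos hle)
    exact ⟨i, hi, ih (List.drop_ne_nil_of_lt_length hi) hpos⟩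

end PForm

/-- on nonempty finite traces, strictly positive robustness
implies Boolean satisfaction and strictly negative robustness implies
Boolean non-satisfaction, for the negation-free fragment. -/
theorem rho_characterizes_sat {σ : Type} (ψ : PForm σ) (t : List σ)
    (ht : t ≠ []) :
    (0 < rhoP ψ t → bsat ψ t) ∧ (rhoP ψ t < 0 → ¬ bsat ψ t) :=
  ⟨PForm.bsat_of_rhoP_pos ht, fun hneg hsat => (PForm.rhoP_nonneg_of_bsat hsat).not_gt hneg⟩
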